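/- Let r₁, r₂ be complex numbers with Re(r₁) ≥ Re(r₂) and Re(r₁) ≥ -1, and let f₁ : ℝ → ℂ satisfy |f₁(u)| ≤ A e^{-4u} for all u ≥ 1 with A ≥ 0. Define A₁(t) = ∫_1^t e^{(r₁-r₂)s} (∫_s^∞ e^{-r₁ u} f₁(u) du) ds. Then for all t ≥ 1, |e^{r₂ t} A₁(t)| ≤ (A/(9e³)) e^{t Re(r₁)}. -/

import Mathlib

/-!
With `c = Re r₁ + 4 ≥ 3`, the inner tail integral is at most `A e^{-c s} / c`. On `[1, t]` we have
`|e^{(r₁ - r₂) s}| ≤ e^{(Re r₁ - Re r₂) t}`, so the outer integral is at most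
`e^{(Re r₁ - Re r₂) t} · A e^{-c} / c²`, and `e^{-c} / c² ≤ e^{-3} / 9`.
-/

open MeasureTheory Set Real

lemma Complex.norm_exp_mul_ofReal (z : ℂ) (x : ℝ) : ‖Complex.exp (z * x)‖ = rexp (z.re * x) := by
  simp [Complex.norm_exp]

section ExpDecay

variable {E : Type*} [NormedAddCommGroup E] [NormedSpace ℝ E] {c : ℝ}

lemma norm_setIntegral_Ici_le_of_norm_le_exp {f : ℝ → E} {A s : ℝ} (hc : 0 < c)
    (hf : ∀ u ≥ s, ‖f u‖ ≤ A * rexp (-c * u)) :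
    ‖∫ u in Ici s, f u‖ ≤ A * rexp (-c * s) / c := by
  have hint : IntegrableOn (fun u ↦ A * rexp (-c * u)) (Ici s) :=
    (integrableOn_Ici_iff_integrableOn_Ioi).mpr
      ((integrableOn_exp_mul_Ioi (neg_neg_iff_pos.mpr hc) s).const_mul A)
  calc ‖∫ u in Ici s, f u‖ ≤ ∫ u in Ici s, A * rexp (-c * u) :=
        norm_integral_le_of_norm_le hint ((ae_restrict_iff' measurableSet_Ici).mpr (.of_forall hf))
    _ = A * rexp (-c * s) / c := by
        rw [integral_const_mul, integral_Ici_eq_integral_Ioi,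
          integral_exp_mul_Ioi (neg_neg_iff_pos.mpr hc)]
        field_simp

lemma integral_exp_neg_mul_le {a b : ℝ} (hab : a ≤ b) (hc : 0 < c) :
    ∫ x in a..b, rexp (-c * x) ≤ rexp (-c * a) / c := by
  rw [intervalIntegral.integral_of_le hab, ← neg_div_neg_eq, ← integral_exp_mul_Ioi (by linarith)]
  exact setIntegral_mono_set (integrableOn_exp_mul_Ioi (by linarith) a)
    (.of_forall fun x ↦ (exp_pos _).le) Ioc_subset_Ioi_self.eventuallyLE

lemma norm_intervalIntegral_le_of_norm_le_exp {g : ℝ → E} {B a b : ℝ} (hab : a ≤ b)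
    (hc : 0 < c) (hB : 0 ≤ B) (hg : ∀ s ∈ Ioc a b, ‖g s‖ ≤ B * rexp (-c * s)) :
    ‖∫ s in a..b, g s‖ ≤ B * rexp (-c * a) / c :=
  calc ‖∫ s in a..b, g s‖ ≤ ∫ s in a..b, B * rexp (-c * s) :=
        intervalIntegral.norm_integral_le_of_norm_le hab (.of_forall hg)
          ((continuous_const.mul (by fun_prop)).intervalIntegrable _ _)
    _ ≤ B * rexp (-c * a) / c := by
        rw [intervalIntegral.integral_const_mul, mul_div_assoc]
        exact mul_le_mul_of_nonneg_left (integral_exp_neg_mul_le hab hc) hB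

end ExpDecay

lemma norm_setIntegral_Ici_cexp_mul_le {f : ℝ → ℂ} {r : ℂ} {A b s : ℝ} (hrb : 0 < r.re + b)
    (hf : ∀ u ≥ s, ‖f u‖ ≤ A * rexp (-b * u)) :
    ‖∫ u in Ici s, Complex.exp (-r * u) * f u‖ ≤ A * rexp (-(r.re + b) * s) / (r.re + b) := by
  refine norm_setIntegral_Ici_le_of_norm_le_exp hrb fun u hu ↦ ?_
  rw [norm_mul, Complex.norm_exp_mul_ofReal]
  calc rexp ((-r).re * u) * ‖f u‖ ≤ rexp ((-r).re * u) * (A * rexp (-b * u)) :=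
        mul_le_mul_of_nonneg_left (hf u hu) (exp_pos _).le
    _ = A * rexp (-(r.re + b) * u) := by
        rw [mul_left_comm, ← exp_add, Complex.neg_re]; ring_nf

theorem stmt_6_general (r₁ r₂ : ℂ) (h12 : r₁.re ≥ r₂.re) (h1 : r₁.re ≥ -1)
    (f₁ : ℝ → ℂ) (A : ℝ) (hA : A ≥ 0)
    (hbd : ∀ u ≥ (1:ℝ), ‖f₁ u‖ ≤ A * Real.exp (-4*u))
    (A₁ : ℝ → ℂ)
    (hA₁ : ∀ t, A₁ t = ∫ s in (1:ℝ)..t,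
        Complex.exp ((r₁ - r₂) * s) * ∫ u in Set.Ici s, Complex.exp (-r₁ * u) * f₁ u) :
    ∀ t ≥ (1:ℝ),
      ‖Complex.exp (r₂ * t) * A₁ t‖ ≤ A / (9 * Real.exp 3) * Real.exp (t * r₁.re) := by
  intro t ht
  set c := r₁.re + 4
  have hc : 3 ≤ c := by linarith
  have outer : ‖A₁ t‖ ≤ rexp ((r₁ - r₂).re * t) * (A / c) * rexp (-c * 1) / c := by
    rw [hA₁]
    refine norm_intervalIntegral_le_of_norm_le_exp ht (by linarith) (by positivity) ?_
    rintro s ⟨hs, hst⟩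
    rw [norm_mul, Complex.norm_exp_mul_ofReal, mul_assoc (rexp _)]
    refine mul_le_mul (exp_le_exp.mpr ?_) ?_ (norm_nonneg _) (exp_pos _).le
    · exact mul_le_mul_of_nonneg_left hst (by simpa using h12)
    · exact (norm_setIntegral_Ici_cexp_mul_le (b := 4) (by linarith)
        fun u hu ↦ hbd u (hs.le.trans hu)).trans_eq (by ring)
  have exp_re : rexp (r₂.re * t) * rexp ((r₁ - r₂).re * t) = rexp (t * r₁.re) := by
    rw [← exp_add, Complex.sub_re]; ring_nf
  calc ‖Complex.exp (r₂ * t) * A₁ t‖ = rexp (r₂.re * t) * ‖A₁ t‖ := by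
        rw [norm_mul, Complex.norm_exp_mul_ofReal]
    _ ≤ rexp (r₂.re * t) * (rexp ((r₁ - r₂).re * t) * (A / c) * rexp (-c * 1) / c) := by gcongr
    _ = A * (rexp (-c) / c ^ 2) * rexp (t * r₁.re) := by rw [← exp_re]; ring_nf
    _ ≤ A * (rexp (-3) / 3 ^ 2) * rexp (t * r₁.re) := by gcongr
    _ = A / (9 * rexp 3) * rexp (t * r₁.re) := by rw [exp_neg]; ring

theorem stmt_6 (r₁ r₂ : ℂ) (h12 : r₁.re ≥ r₂.re) (h1 : r₁.re ≥ -1)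
    (f₁ : ℝ → ℂ) (hf : Continuous f₁) (A : ℝ) (hA : A ≥ 0)
    (hbd : ∀ u ≥ (1:ℝ), ‖f₁ u‖ ≤ A * Real.exp (-4*u))
    (A₁ : ℝ → ℂ)
    (hA₁ : ∀ t, A₁ t = ∫ s in (1:ℝ)..t,
        Complex.exp ((r₁ - r₂) * s) * ∫ u in Set.Ici s, Complex.exp (-r₁ * u) * f₁ u) :
    ∀ t ≥ (1:ℝ),
      ‖Complex.exp (r₂ * t) * A₁ t‖ ≤ A / (9 * Real.exp 3) * Real.exp (t * r₁.re) :=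
  stmt_6_general r₁ r₂ h12 h1 f₁ A hA hbd A₁ hA₁
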